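/- Let n ≥ 3. Let T be the quotient space ((ℝ^{n−1}∖{0}) × [0,π]) / ∼, where (X,0) ∼ (−X,π), equipped with the quotient topology. Then the map ψ : T → 𝕄(n) induced by ψ((x₁,…,x_{n−1}), θ) = (0, e^{iθ}x₁, …, e^{iθ}x_{n−1}) ∈ ℂ^n is well defined and is a homeomorphism onto 𝕄(n). -/

import Mathlib

open Complex

noncomputable section

/-- The set of `n`-segments in `ℂ^n`: non-constant tuples all of whose entries lie on a
common real affine line `t ↦ a·t + b` in `ℂ`. -/
def Lset (n : ℕ) : Set (Fin n → ℂ) :=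
  {Z | (¬ ∃ b : ℂ, ∀ j, Z j = b) ∧ ∃ (a b : ℂ) (X : Fin n → ℝ), ∀ j, Z j = a * (X j) + b}

/-- `𝕄(n)` (with `n = m + 3`): the `n`-segments whose first vertex is `0`. -/
def Mset (m : ℕ) : Set (Fin (m + 3) → ℂ) :=
  {Z | Z ∈ Lset (m + 3) ∧ Z 0 = 0}

/-- The space `(ℝ^{n-1} ∖ {0}) × [0, π]` (with `n = m + 3`). -/
abbrev Tpre (m : ℕ) : Type :=
  {X : Fin (m + 2) → ℝ // X ≠ 0} × {θ : ℝ // θ ∈ Set.Icc (0 : ℝ) Real.pi}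

/-- The gluing relation `(X, 0) ∼ (-X, π)` on `Tpre m`. -/
def Trel (m : ℕ) (p q : Tpre m) : Prop :=
  (q.1 : Fin (m + 2) → ℝ) = -(p.1 : Fin (m + 2) → ℝ) ∧ (p.2 : ℝ) = 0 ∧ (q.2 : ℝ) = Real.pi

/-- `ψ((x₁, …, x_{n-1}), θ) = (0, e^{iθ}x₁, …, e^{iθ}x_{n-1})`. -/
def psi (m : ℕ) (p : Tpre m) : Fin (m + 3) → ℂ :=
  Fin.cons 0 fun i =>
    Complex.exp (((p.2 : ℝ) : ℂ) * Complex.I) * (((p.1 : Fin (m + 2) → ℝ) i : ℝ) : ℂ)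

namespace MTAux

lemma exists_ne_zero {m : ℕ} {X : Fin (m + 2) → ℝ} (hX : X ≠ 0) : ∃ i, X i ≠ 0 := by
  by_contra h
  push_neg at h
  exact hX (funext fun i => h i)

lemma psi_zero (m : ℕ) (p : Tpre m) : psi m p 0 = 0 := by simp [psi]

lemma psi_succ (m : ℕ) (p : Tpre m) (i : Fin (m + 2)) :
    psi m p i.succ = Complex.exp (((p.2 : ℝ) : ℂ) * I) * (((p.1 : Fin (m + 2) → ℝ) i : ℝ) : ℂ) := by
  simp [psi]

lemma psi_mem (m : ℕ) (p : Tpre m) : psi m p ∈ Mset m := by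
  refine ⟨⟨?_, Complex.exp (((p.2 : ℝ) : ℂ) * I), 0, Fin.cons 0 (p.1 : Fin (m + 2) → ℝ), ?_⟩, psi_zero m p⟩
  · rintro ⟨b, hb⟩
    have hb0 : b = 0 := by rw [← hb 0, psi_zero]
    obtain ⟨i, hi⟩ := exists_ne_zero p.1.2
    have := hb i.succ
    rw [psi_succ, hb0] at this
    exact (mul_ne_zero (Complex.exp_ne_zero _) (by exact_mod_cast hi)) this
  · intro j
    induction j using Fin.cases with
    | zero => simp [psi]
    | succ i => simp [psi]

lemma psi_surj (m : ℕ) (Z : Fin (m + 3) → ℂ) (hZ : Z ∈ Mset m) : ∃ p : Tpre m, psi m p = Z := by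
  obtain ⟨⟨hnc, a, b, X, hX⟩, h0⟩ := hZ
  have hb : b = -(a * X 0) := by
    have := hX 0
    rw [h0] at this
    linear_combination -this
  have hZj : ∀ j, Z j = a * ((X j : ℂ) - (X 0 : ℂ)) := by
    intro j
    rw [hX j, hb]; ring
  have ha : a ≠ 0 := by
    rintro rfl
    exact hnc ⟨b, fun j => by rw [hX j]; ring⟩
  obtain ⟨j0, hj0⟩ : ∃ j, Z j ≠ 0 := by
    by_contra h
    push_neg at h
    exact hnc ⟨0, h⟩
  set Y : Fin (m + 2) → ℝ := fun i => X i.succ - X 0 with hY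
  have hZsucc : ∀ i : Fin (m + 2), Z i.succ = a * (Y i : ℂ) := by
    intro i
    rw [hZj i.succ]; push_cast [hY]; ring
  obtain ⟨i0, hi0⟩ : ∃ i, Y i ≠ 0 := by
    rcases Fin.eq_zero_or_eq_succ j0 with rfl | ⟨i, rfl⟩
    · exact absurd h0 hj0
    · refine ⟨i, fun h => hj0 ?_⟩
      rw [hZsucc i, h]; simp
  have hYne : Y ≠ 0 := fun h => hi0 (by rw [h]; rfl)
  have hρ : (‖a‖ : ℝ) ≠ 0 := by
    simpa using ha
  have hpolar : (‖a‖ : ℂ) * Complex.exp ((a.arg : ℂ) * I) = a :=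
    Complex.norm_mul_exp_arg_mul_I a
  rcases le_or_gt 0 a.arg with hα | hα
  · refine ⟨⟨⟨‖a‖ • Y, smul_ne_zero hρ hYne⟩, ⟨a.arg, hα, Complex.arg_le_pi a⟩⟩, ?_⟩
    funext j
    induction j using Fin.cases with
    | zero => rw [psi_zero]; exact h0.symm
    | succ i =>
      rw [psi_succ, hZsucc i]
      show Complex.exp ((a.arg : ℂ) * I) * ((‖a‖ * Y i : ℝ) : ℂ) = _
      push_cast
      have hYc : ((Y i : ℝ) : ℂ) = (X i.succ : ℂ) - (X 0 : ℂ) := by simp [hY]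
      rw [hYc]
      linear_combination ((X i.succ : ℂ) - (X 0 : ℂ)) * hpolar
  · have hθ0 : 0 ≤ a.arg + Real.pi := by linarith [Complex.neg_pi_lt_arg a]
    have hθπ : a.arg + Real.pi ≤ Real.pi := by linarith
    refine ⟨⟨⟨(-(‖a‖)) • Y, smul_ne_zero (neg_ne_zero.2 hρ) hYne⟩,
      ⟨a.arg + Real.pi, hθ0, hθπ⟩⟩, ?_⟩
    funext j
    induction j using Fin.cases with
    | zero => rw [psi_zero]; exact h0.symm
    | succ i =>
      rw [psi_succ, hZsucc i]
      show Complex.exp (((a.arg + Real.pi : ℝ) : ℂ) * I) * ((-(‖a‖) * Y i : ℝ) : ℂ) = _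
      push_cast
      rw [add_mul, Complex.exp_add, Complex.exp_pi_mul_I]
      have hYc : ((Y i : ℝ) : ℂ) = (X i.succ : ℂ) - (X 0 : ℂ) := by simp [hY]
      rw [hYc]
      linear_combination ((X i.succ : ℂ) - (X 0 : ℂ)) * hpolar

lemma psi_rel (m : ℕ) (p q : Tpre m) (h : Trel m p q) : psi m p = psi m q := by
  obtain ⟨h1, h2, h3⟩ := h
  funext j
  induction j using Fin.cases with
  | zero => rw [psi_zero, psi_zero]
  | succ i =>
    rw [psi_succ, psi_succ, h1, h2, h3]
    rw [Complex.exp_pi_mul_I]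
    simp

lemma psi_inj (m : ℕ) (p q : Tpre m) (h : psi m p = psi m q) :
    Quot.mk (Trel m) p = Quot.mk (Trel m) q := by
  obtain ⟨⟨X, hX⟩, θ, hθ1, hθ2⟩ := p
  obtain ⟨⟨Y, hY⟩, φ, hφ1, hφ2⟩ := q
  have hent : ∀ i, Complex.exp ((θ : ℂ) * I) * (X i : ℂ) = Complex.exp ((φ : ℂ) * I) * (Y i : ℂ) := by
    intro i
    have := congrFun h i.succ
    rwa [psi_succ, psi_succ] at this
  obtain ⟨i0, hi0⟩ := exists_ne_zero hX
  set r : ℝ := Y i0 / X i0 with hr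
  have h1 : Complex.exp ((θ : ℂ) * I) = Complex.exp ((φ : ℂ) * I) * (r : ℂ) := by
    have hx : (X i0 : ℂ) ≠ 0 := by exact_mod_cast hi0
    rw [hr, Complex.ofReal_div, eq_comm, mul_div_assoc', div_eq_iff hx, eq_comm]
    exact hent i0
  have habs : |r| = 1 := by
    have := congrArg norm h1
    rw [Complex.norm_exp_ofReal_mul_I] at this
    rw [norm_mul, Complex.norm_exp_ofReal_mul_I, Complex.norm_real, Real.norm_eq_abs] at this
    linarith [this]
  have hre : Real.cos θ = Real.cos φ * r := by
    have := congrArg Complex.re h1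
    simpa [Complex.exp_ofReal_mul_I_re, Complex.exp_ofReal_mul_I_im] using this
  have him : Real.sin θ = Real.sin φ * r := by
    have := congrArg Complex.im h1
    simpa [Complex.exp_ofReal_mul_I_re, Complex.exp_ofReal_mul_I_im] using this
  rcases abs_eq (by norm_num : (0:ℝ) ≤ 1) |>.mp habs with hr1 | hr1
  · -- r = 1 : θ = φ, X = Y
    have hcos : Real.cos θ = Real.cos φ := by rw [hre, hr1, mul_one]
    have hθφ : θ = φ := Real.injOn_cos ⟨hθ1, hθ2⟩ ⟨hφ1, hφ2⟩ hcos
    have hXY : X = Y := by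
      funext i
      have := hent i
      rw [hθφ] at this
      have := mul_left_cancel₀ (Complex.exp_ne_zero _) this
      exact_mod_cast this
    subst hθφ hXY
    rfl
  · -- r = -1
    have hcos : Real.cos θ = -Real.cos φ := by rw [hre, hr1]; ring
    have hsin : Real.sin θ = -Real.sin φ := by rw [him, hr1]; ring
    have hsθ : Real.sin θ = 0 := by
      have h1 := Real.sin_nonneg_of_nonneg_of_le_pi hθ1 hθ2
      have h2 := Real.sin_nonneg_of_nonneg_of_le_pi hφ1 hφ2
      linarith
    have hsφ : Real.sin φ = 0 := by linarith [hsθ, hsin]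
    have hXY : Y = -X := by
      funext i
      have h2 : Complex.exp ((φ : ℂ) * I) = -Complex.exp ((θ : ℂ) * I) := by
        rw [h1, hr1]; push_cast; ring
      have := hent i
      rw [h2] at this
      have : Complex.exp ((θ : ℂ) * I) * (X i : ℂ) = Complex.exp ((θ : ℂ) * I) * (-(Y i) : ℂ) := by
        rw [this]; ring
      have := mul_left_cancel₀ (Complex.exp_ne_zero _) this
      have : (X i : ℝ) = -(Y i) := by exact_mod_cast this
      simp [Pi.neg_apply]
      linarith
    -- θ, φ ∈ {0, π}
    have hθcases : θ = 0 ∨ θ = Real.pi := by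
      rcases Real.sin_eq_zero_iff.mp hsθ with ⟨n, hn⟩
      have hpi := Real.pi_pos
      have hn0 : n = 0 ∨ n = 1 := by
        by_contra hcon
        push_neg at hcon
        rcases lt_or_ge n 0 with h | h
        · have : (n:ℝ) ≤ -1 := by exact_mod_cast (show (n:ℤ) ≤ -1 by omega)
          nlinarith
        · have : (2:ℝ) ≤ n := by exact_mod_cast (show (2:ℤ) ≤ n by omega)
          nlinarith
      rcases hn0 with rfl | rfl
      · left; simpa using hn.symm
      · right; simpa using hn.symm
    have hφcases : φ = 0 ∨ φ = Real.pi := by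
      rcases Real.sin_eq_zero_iff.mp hsφ with ⟨n, hn⟩
      have hpi := Real.pi_pos
      have hn0 : n = 0 ∨ n = 1 := by
        by_contra hcon
        push_neg at hcon
        rcases lt_or_ge n 0 with h | h
        · have : (n:ℝ) ≤ -1 := by exact_mod_cast (show (n:ℤ) ≤ -1 by omega)
          nlinarith
        · have : (2:ℝ) ≤ n := by exact_mod_cast (show (2:ℤ) ≤ n by omega)
          nlinarith
      rcases hn0 with rfl | rfl
      · left; simpa using hn.symm
      · right; simpa using hn.symm
    have hpi := Real.pi_pos
    rcases hθcases with rfl | rfl <;> rcases hφcases with rfl | rfl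
    · exfalso; rw [Real.cos_zero] at hcos; linarith [Real.cos_zero]
    · -- θ = 0, φ = π : Trel p q
      exact Quot.sound ⟨hXY, rfl, rfl⟩
    · -- θ = π, φ = 0 : Trel q p
      have hXY' : X = -Y := by rw [hXY]; simp
      exact (Quot.sound ⟨hXY', rfl, rfl⟩).symm
    · exfalso; rw [Real.cos_pi] at hcos; linarith


def Ftot (m : ℕ) (p : (Fin (m + 2) → ℝ) × ℝ) : Fin (m + 3) → ℂ :=
  Fin.cons 0 fun i => Complex.exp ((p.2 : ℂ) * I) * ((p.1 i : ℝ) : ℂ)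

def iota (m : ℕ) (p : Tpre m) : (Fin (m + 2) → ℝ) × ℝ :=
  ((p.1 : Fin (m + 2) → ℝ), (p.2 : ℝ))

lemma Ftot_iota (m : ℕ) (p : Tpre m) : Ftot m (iota m p) = psi m p := rfl

lemma continuous_Ftot (m : ℕ) : Continuous (Ftot m) := by
  apply continuous_pi
  intro j
  induction j using Fin.cases with
  | zero =>
    simp only [Ftot, Fin.cons_zero]
    exact continuous_const
  | succ i =>
    simp only [Ftot, Fin.cons_succ]
    fun_prop

lemma continuous_iota (m : ℕ) : Continuous (iota m) :=
  (continuous_subtype_val.comp continuous_fst).prodMk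
    (continuous_subtype_val.comp continuous_snd)

lemma embedding_iota (m : ℕ) : Topology.IsEmbedding (iota m) :=
  Topology.IsEmbedding.prodMap Topology.IsEmbedding.subtypeVal Topology.IsEmbedding.subtypeVal

lemma continuous_psi (m : ℕ) : Continuous (fun p : Tpre m => psi m p) := by
  apply continuous_pi
  intro j
  induction j using Fin.cases with
  | zero =>
    simp only [psi, Fin.cons_zero]
    exact continuous_const
  | succ i =>
    simp only [psi, Fin.cons_succ]
    have h2 : Continuous fun p : Tpre m => ((p.2 : ℝ) : ℂ) :=
      Complex.continuous_ofReal.comp (continuous_subtype_val.comp continuous_snd)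
    have h1 : Continuous fun p : Tpre m => (((p.1 : Fin (m + 2) → ℝ) i : ℝ) : ℂ) :=
      Complex.continuous_ofReal.comp
        ((continuous_apply i).comp (continuous_subtype_val.comp continuous_fst))
    exact (Complex.continuous_exp.comp (h2.mul continuous_const)).mul h1

/-- `Ftot` restricted to a closed subset of `ℝ^{m+2} × [0, π]` has closed image. -/
lemma isClosed_Ftot_image (m : ℕ) {A : Set ((Fin (m + 2) → ℝ) × ℝ)} (hA : IsClosed A)
    (hA2 : A ⊆ Set.univ ×ˢ Set.Icc (0 : ℝ) Real.pi) : IsClosed (Ftot m '' A) := by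
  have hproper : IsProperMap (A.restrict (Ftot m)) := by
    rw [isProperMap_iff_isCompact_preimage]
    refine ⟨(continuous_Ftot m).comp continuous_subtype_val, ?_⟩
    intro K hK
    rw [Topology.IsEmbedding.subtypeVal.isCompact_iff]
    have himg : Subtype.val '' (A.restrict (Ftot m) ⁻¹' K) = A ∩ (Ftot m ⁻¹' K) := by
      have : A.restrict (Ftot m) ⁻¹' K = (Subtype.val : A → _) ⁻¹' (Ftot m ⁻¹' K) := rfl
      rw [this, Subtype.image_preimage_coe]
    rw [himg]
    obtain ⟨R, hR⟩ := isBounded_iff_forall_norm_le.mp hK.isBounded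
    set M : ℝ := max R Real.pi with hM
    have hM0 : 0 ≤ M := le_trans Real.pi_pos.le (le_max_right _ _)
    have hsub : A ∩ (Ftot m ⁻¹' K) ⊆ (Metric.closedBall (0 : Fin (m + 2) → ℝ) M) ×ˢ
        Set.Icc (0 : ℝ) Real.pi := by
      rintro ⟨X, θ⟩ ⟨hpA, hpK⟩
      have hθ : θ ∈ Set.Icc (0 : ℝ) Real.pi := (hA2 hpA).2
      refine ⟨?_, hθ⟩
      rw [Metric.mem_closedBall, dist_zero_right]
      rw [pi_norm_le_iff_of_nonneg hM0]
      intro i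
      have hnorm : ‖Ftot m (X, θ) i.succ‖ = ‖X i‖ := by
        simp [Ftot, norm_mul, Complex.norm_exp_ofReal_mul_I,
          Complex.norm_real]
      have h1 : ‖X i‖ ≤ ‖Ftot m (X, θ)‖ := by
        rw [← hnorm]; exact norm_le_pi_norm _ _
      have h2 : ‖Ftot m (X, θ)‖ ≤ R := hR _ hpK
      exact le_trans (le_trans h1 h2) (le_max_left _ _)
    exact ((isCompact_closedBall _ _).prod isCompact_Icc).of_isClosed_subset
      (hA.inter ((hK.isClosed).preimage (continuous_Ftot m))) hsub
  have hrange : IsClosed (Set.range (A.restrict (Ftot m))) :=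
    hproper.isClosedMap.isClosed_range
  rwa [show Set.range (A.restrict (Ftot m)) = Ftot m '' A from Set.range_domRestrict _ _] at hrange

/-- The key closedness property: `F : Tpre m → Mset m` is a closed map. -/
lemma isClosedMap_F (m : ℕ) :
    IsClosedMap (fun p : Tpre m => (⟨psi m p, psi_mem m p⟩ : ↥(Mset m))) := by
  intro C hC
  obtain ⟨T, hTclosed, hTpre⟩ := (embedding_iota m).isInducing.isClosed_iff.mp hC
  set A : Set ((Fin (m + 2) → ℝ) × ℝ) := T ∩ (Set.univ ×ˢ Set.Icc (0 : ℝ) Real.pi) with hAdef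
  have hAclosed : IsClosed A := hTclosed.inter (isClosed_univ.prod isClosed_Icc)
  have himgclosed : IsClosed (Ftot m '' A) :=
    isClosed_Ftot_image m hAclosed Set.inter_subset_right
  have hkey : (fun p : Tpre m => (⟨psi m p, psi_mem m p⟩ : ↥(Mset m))) '' C =
      Subtype.val ⁻¹' (Ftot m '' A) := by
    ext z
    constructor
    · rintro ⟨p, hpC, rfl⟩
      refine ⟨iota m p, ⟨?_, ?_⟩, Ftot_iota m p⟩
      · rw [← hTpre] at hpC; exact hpC
      · exact ⟨Set.mem_univ _, p.2.2⟩
    · rintro ⟨a, haA, ha⟩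
      have ha1 : a.1 ≠ 0 := by
        intro h0
        have hz0 : ∀ j, (z : Fin (m + 3) → ℂ) j = 0 := by
          intro j
          rw [← ha]
          induction j using Fin.cases with
          | zero => simp [Ftot]
          | succ i => simp [Ftot, h0]
        exact z.2.1.1 ⟨0, hz0⟩
      have ha2 : a.2 ∈ Set.Icc (0 : ℝ) Real.pi := haA.2.2
      refine ⟨(⟨a.1, ha1⟩, ⟨a.2, ha2⟩), ?_, ?_⟩
      · have hio : iota m (⟨a.1, ha1⟩, ⟨a.2, ha2⟩) = a := rfl
        rw [← hTpre]
        show iota m _ ∈ T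
        rw [hio]
        exact haA.1
      · apply Subtype.ext
        show psi m _ = (z : Fin (m + 3) → ℂ)
        rw [← Ftot_iota]
        have hio : iota m (⟨a.1, ha1⟩, ⟨a.2, ha2⟩) = a := rfl
        rw [hio, ha]
  rw [hkey]
  exact himgclosed.preimage continuous_subtype_val


def Fmap (m : ℕ) : Tpre m → ↥(Mset m) := fun p => ⟨psi m p, psi_mem m p⟩

lemma Frel (m : ℕ) : ∀ p q, Trel m p q → Fmap m p = Fmap m q := fun p q h =>
  Subtype.ext (psi_rel m p q h)

def Gmap (m : ℕ) : Quot (Trel m) → ↥(Mset m) := Quot.lift (Fmap m) (Frel m)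

lemma Gmap_bijective (m : ℕ) : Function.Bijective (Gmap m) := by
  constructor
  · intro x y
    induction x using Quot.ind with | _ p => ?_
    induction y using Quot.ind with | _ q => ?_
    intro hxy
    have hxy' : psi m p = psi m q := congrArg Subtype.val hxy
    exact psi_inj m p q hxy'
  · intro z
    obtain ⟨p, hp⟩ := psi_surj m z.val z.2
    exact ⟨Quot.mk _ p, Subtype.ext hp⟩

lemma Gmap_continuous (m : ℕ) : Continuous (Gmap m) :=
  continuous_quot_lift (Frel m) ((continuous_psi m).subtype_mk _)

lemma Gmap_isClosedMap (m : ℕ) : IsClosedMap (Gmap m) := by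
  intro C hC
  have h1 : Gmap m '' C = Fmap m '' (Quot.mk (Trel m) ⁻¹' C) := by
    conv_lhs => rw [← Set.image_preimage_eq C (Quot.mk_surjective)]
    rw [← Set.image_comp]
    rfl
  rw [h1]
  exact isClosedMap_F m _ (hC.preimage continuous_quot_mk)

lemma Gmap_isOpenMap (m : ℕ) : IsOpenMap (Gmap m) := by
  intro U hU
  rw [← compl_compl U, Set.image_compl_eq (Gmap_bijective m)]
  exact (Gmap_isClosedMap m _ hU.isClosed_compl).isOpen_compl

end MTAux

/-- For `n = m + 3 ≥ 3`, the map `ψ` takes values in `𝕄(n)`, is well defined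
on the mapping-torus quotient `T = ((ℝ^{n-1}∖{0}) × [0,π]) / ((X,0) ∼ (-X,π))`, and the induced
map is a homeomorphism from `T` onto `𝕄(n)`. -/
theorem mapping_torus_homeomorph_Mset (m : ℕ) :
    (∀ p : Tpre m, psi m p ∈ Mset m) ∧
    ∃ h : Quot (Trel m) ≃ₜ ↥(Mset m),
      ∀ p : Tpre m, ((h (Quot.mk (Trel m) p) : Fin (m + 3) → ℂ)) = psi m p := by
  refine ⟨MTAux.psi_mem m, ?_⟩
  exact ⟨Equiv.toHomeomorphOfContinuousOpen (Equiv.ofBijective _ (MTAux.Gmap_bijective m))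
    (MTAux.Gmap_continuous m) (MTAux.Gmap_isOpenMap m), fun p => rfl⟩
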